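/- arXiv:1802.05655 — 6 statements merged into one kernel-verified Lean document; each statement's English description precedes it below -/
import Mathlib

section
/- Let a : [0,∞) → ℝ be strictly increasing with a(0) = 0, and let X, Y be vectors in an inner product space with X, Y ≠ 0. Then ⟨(a(|X|)/|X|)·X − (a(|Y|)/|Y|)·Y, X − Y⟩ ≥ (a(|X|) − a(|Y|))·(|X| − |Y|) ≥ 0. -/
open Set

/-!
Write `s = ‖X‖`, `t = ‖Y‖`. Expanding the inner product, the diagonal terms give
`a(s) s + a(t) t`, while by Cauchy–Schwarz each cross term `⟪(a(s)/s) X, Y⟫` is at most `a(s) t`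
(this needs `a ≥ 0`, which follows from monotonicity and `a 0 = 0`). What remains is
`(a(s) - a(t))(s - t)`, which is nonnegative because `a` is monotone.
-/

section InnerProduct

variable {E : Type*} [NormedAddCommGroup E] [InnerProductSpace ℝ E]

theorem real_inner_div_norm_smul_self (c : ℝ) (X : E) :
    inner ℝ ((c / ‖X‖) • X) X = c * ‖X‖ := by
  rcases eq_or_ne X 0 with rfl | hX
  · simp
  · rw [real_inner_smul_left, real_inner_self_eq_norm_mul_norm]
    field_simp

theorem real_inner_div_norm_smul_le {c : ℝ} (hc : 0 ≤ c) (X Y : E) :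
    inner ℝ ((c / ‖X‖) • X) Y ≤ c * ‖Y‖ := by
  rcases eq_or_ne X 0 with rfl | hX
  · simpa using mul_nonneg hc (norm_nonneg Y)
  · calc inner ℝ ((c / ‖X‖) • X) Y ≤ ‖(c / ‖X‖) • X‖ * ‖Y‖ := real_inner_le_norm _ _
      _ = c * ‖Y‖ := by
        rw [norm_smul, Real.norm_of_nonneg (by positivity),
          div_mul_cancel₀ c (norm_ne_zero_iff.mpr hX)]

theorem mul_sub_norm_le_inner_div_norm_smul_sub {f g : ℝ} (hf : 0 ≤ f) (hg : 0 ≤ g) (X Y : E) :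
    (f - g) * (‖X‖ - ‖Y‖) ≤ inner ℝ ((f / ‖X‖) • X - (g / ‖Y‖) • Y) (X - Y) := by
  rw [inner_sub_left, inner_sub_right, inner_sub_right,
    real_inner_div_norm_smul_self, real_inner_div_norm_smul_self]
  linarith [real_inner_div_norm_smul_le hf X Y, real_inner_div_norm_smul_le hg Y X]

end InnerProduct

theorem MonotoneOn.sub_mul_sub_nonneg {α : Type*} [Ring α] [LinearOrder α] [IsStrictOrderedRing α]
    {s : Set α} {a : α → α} (ha : MonotoneOn a s) {x y : α}
    (hx : x ∈ s) (hy : y ∈ s) : 0 ≤ (a x - a y) * (x - y) :=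
  (monovaryOn_id_iff.mpr ha).sub_mul_sub_nonneg hy hx

theorem stmt_0_general {E : Type*} [NormedAddCommGroup E] [InnerProductSpace ℝ E]
    (a : ℝ → ℝ) (ha : StrictMonoOn a (Set.Ici 0)) (ha0 : a 0 = 0)
    (X Y : E) :
    (a ‖X‖ - a ‖Y‖) * (‖X‖ - ‖Y‖) ≤
      inner ℝ ((a ‖X‖ / ‖X‖) • X - (a ‖Y‖ / ‖Y‖) • Y) (X - Y) ∧
    (0 : ℝ) ≤ (a ‖X‖ - a ‖Y‖) * (‖X‖ - ‖Y‖) := by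
  have hmono : MonotoneOn a (Ici 0) := ha.monotoneOn
  have ha_norm_nonneg (Z : E) : 0 ≤ a ‖Z‖ :=
    ha0 ▸ hmono self_mem_Ici (norm_nonneg Z) (norm_nonneg Z)
  exact ⟨mul_sub_norm_le_inner_div_norm_smul_sub (ha_norm_nonneg X) (ha_norm_nonneg Y) X Y,
    hmono.sub_mul_sub_nonneg (norm_nonneg X) (norm_nonneg Y)⟩

theorem stmt_0 {E : Type*} [NormedAddCommGroup E] [InnerProductSpace ℝ E]
    (a : ℝ → ℝ) (ha : StrictMonoOn a (Set.Ici 0)) (ha0 : a 0 = 0)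
    (X Y : E) (hX : X ≠ 0) (hY : Y ≠ 0) :
    (a ‖X‖ - a ‖Y‖) * (‖X‖ - ‖Y‖) ≤
      inner ℝ ((a ‖X‖ / ‖X‖) • X - (a ‖Y‖ / ‖Y‖) • Y) (X - Y) ∧
    (0 : ℝ) ≤ (a ‖X‖ - a ‖Y‖) * (‖X‖ - ‖Y‖) :=
  stmt_0_general a ha ha0 X Y
end

section
/- Let a : [0,∞) → ℝ be strictly increasing with a(0)=0, and X, Y nonzero vectors in an inner product space. If ⟨(a(|X|)/|X|)·X − (a(|Y|)/|Y|)·Y, X − Y⟩ = 0, then X = Y. -/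
/-!
Write `s = ‖X‖`, `t = ‖Y‖`. Expanding the inner product and using Cauchy–Schwarz gives the
monotonicity estimate `(a s - a t) (s - t) ≤ ⟪F X - F Y, X - Y⟫` for `F ξ = (a ‖ξ‖ / ‖ξ‖) • ξ`,
so equality forces `s = t` because `a` is strictly increasing. Once the norms agree the two
coefficients coincide and the hypothesis reads `(a s / s) ‖X - Y‖² = 0`, where the coefficient
vanishes only when `s = 0`.
-/

open Set

open scoped RealInnerProductSpace

section

variable {E : Type*} [NormedAddCommGroup E] [InnerProductSpace ℝ E]

lemma real_inner_smul_sub_smul_sub_eq (p q : ℝ) (x y : E) :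
    ⟪p • x - q • y, x - y⟫ =
      (p * ‖x‖ - q * ‖y‖) * (‖x‖ - ‖y‖) + (p + q) * (‖x‖ * ‖y‖ - ⟪x, y⟫) := by
  simp only [inner_sub_left, inner_sub_right, real_inner_smul_left, real_inner_self_eq_norm_sq,
    real_inner_comm x y]
  ring

lemma MonotoneOn.mul_sub_sub_le_real_inner_radial {a : ℝ → ℝ} (ha : MonotoneOn a (Ici 0))
    (ha0 : a 0 = 0) (x y : E) :
    (a ‖x‖ - a ‖y‖) * (‖x‖ - ‖y‖) ≤ ⟪(a ‖x‖ / ‖x‖) • x - (a ‖y‖ / ‖y‖) • y, x - y⟫ := by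
  have coeff_mul_norm (z : E) : a ‖z‖ / ‖z‖ * ‖z‖ = a ‖z‖ :=
    div_mul_cancel_of_imp fun hz ↦ by rw [hz, ha0]
  have coeff_nonneg (z : E) : 0 ≤ a ‖z‖ / ‖z‖ := by
    have : a 0 ≤ a ‖z‖ := ha self_mem_Ici (norm_nonneg z) (norm_nonneg z)
    exact div_nonneg (ha0 ▸ this) (norm_nonneg z)
  rw [real_inner_smul_sub_smul_sub_eq, coeff_mul_norm, coeff_mul_norm, le_add_iff_nonneg_right]
  exact mul_nonneg (add_nonneg (coeff_nonneg x) (coeff_nonneg y))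
    (sub_nonneg.mpr (real_inner_le_norm x y))

lemma StrictMonoOn.eq_of_mul_sub_sub_nonpos {a : ℝ → ℝ} {S : Set ℝ} (ha : StrictMonoOn a S)
    {s t : ℝ} (hs : s ∈ S) (ht : t ∈ S) (h : (a s - a t) * (s - t) ≤ 0) : s = t := by
  by_contra hst
  rcases lt_or_gt_of_ne hst with hlt | hlt
  · nlinarith [ha hs ht hlt]
  · nlinarith [ha ht hs hlt]

end

theorem stmt_1_general {E : Type*} [NormedAddCommGroup E] [InnerProductSpace ℝ E]
    (a : ℝ → ℝ) (ha : StrictMonoOn a (Set.Ici 0)) (ha0 : a 0 = 0)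
    (X Y : E)
    (h : (inner ℝ ((a ‖X‖ / ‖X‖) • X - (a ‖Y‖ / ‖Y‖) • Y) (X - Y) : ℝ) = 0) :
    X = Y := by
  have hnorm : ‖X‖ = ‖Y‖ := ha.eq_of_mul_sub_sub_nonpos (norm_nonneg X) (norm_nonneg Y)
    (h ▸ ha.monotoneOn.mul_sub_sub_le_real_inner_radial ha0 X Y)
  rw [hnorm, ← smul_sub, real_inner_smul_left, real_inner_self_eq_norm_sq] at h
  rcases mul_eq_zero.mp h with hcoeff | hsub
  · have hY : ‖Y‖ = 0 := by
      rcases div_eq_zero_iff.mp hcoeff with haY | hY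
      · exact ha.injOn (norm_nonneg Y) self_mem_Ici (haY.trans ha0.symm)
      · exact hY
    rw [norm_eq_zero.mp hY, norm_eq_zero.mp (hnorm.trans hY)]
  · exact sub_eq_zero.mp (norm_eq_zero.mp (pow_eq_zero_iff two_ne_zero |>.mp hsub))

theorem stmt_1 {E : Type*} [NormedAddCommGroup E] [InnerProductSpace ℝ E]
    (a : ℝ → ℝ) (ha : StrictMonoOn a (Set.Ici 0)) (ha0 : a 0 = 0)
    (X Y : E) (hX : X ≠ 0) (hY : Y ≠ 0)
    (h : (inner ℝ ((a ‖X‖ / ‖X‖) • X - (a ‖Y‖ / ‖Y‖) • Y) (X - Y) : ℝ) = 0) :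
    X = Y :=
  stmt_1_general a ha ha0 X Y h
end

section
/- Let b : [s₀,∞) → ℝ be a C¹ function with b ≥ −1 such that (−b′(s)·s − (b(s)+1))·s² ≥ α for all s ≥ s₀, where α > 0. Then b(s) + 1 → 0 as s → ∞. -/
/-!
The hypothesis makes the derivative `(b s + 1) + s * b' s` of `s ↦ s * (b s + 1)` negative,
so this function is antitone on `[s₀, ∞)`. Hence `0 ≤ b s + 1 ≤ s₀ * (b s₀ + 1) / s` for
large `s`.
-/

open Filter Set

theorem antitoneOn_mul_of_hasDerivAt {f f' : ℝ → ℝ} {s₀ : ℝ}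
    (hf : ∀ s, s₀ ≤ s → HasDerivAt f (f' s) s)
    (hneg : ∀ s, s₀ ≤ s → f s + s * f' s ≤ 0) :
    AntitoneOn (fun s => s * f s) (Ici s₀) := by
  have hderiv : ∀ s, s₀ ≤ s → HasDerivAt (fun s => s * f s) (f s + s * f' s) s :=
    fun s hs => by simpa using (hasDerivAt_id s).fun_mul (hf s hs)
  refine antitoneOn_of_hasDerivWithinAt_nonpos (f' := fun s => f s + s * f' s) (convex_Ici s₀)
    (fun s hs => (hderiv s hs).continuousAt.continuousWithinAt) (fun s hs => ?_)
    (fun s hs => ?_)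
  · rw [interior_Ici] at hs
    exact (hderiv s hs.le).hasDerivWithinAt
  · rw [interior_Ici] at hs
    exact hneg s hs.le

theorem tendsto_zero_of_nonneg_of_mul_le {f : ℝ → ℝ} {C : ℝ}
    (hf : ∀ᶠ s in atTop, 0 ≤ f s) (hC : ∀ᶠ s in atTop, s * f s ≤ C) :
    Tendsto f atTop (nhds 0) := by
  refine tendsto_of_tendsto_of_tendsto_of_le_of_le' tendsto_const_nhds
    (tendsto_const_nhds.div_atTop tendsto_id : Tendsto (fun s : ℝ => C / s) atTop (nhds 0)) hf ?_
  filter_upwards [hC, eventually_gt_atTop 0] with s hs hpos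
  rwa [le_div_iff₀ hpos, mul_comm]

theorem stmt_2_general (s₀ α : ℝ) (hα : 0 < α)
    (b b' : ℝ → ℝ)
    (hderiv : ∀ s, s₀ ≤ s → HasDerivAt b (b' s) s)
    (hb : ∀ s, s₀ ≤ s → -1 ≤ b s)
    (hcond : ∀ s, s₀ ≤ s → (-(b' s) * s - (b s + 1)) * s ^ 2 ≥ α) :
    Tendsto (fun s => b s + 1) atTop (nhds 0) := by
  have hneg : ∀ s, s₀ ≤ s → (b s + 1) + s * b' s ≤ 0 := fun s hs => by
    have := pos_of_mul_pos_left (hα.trans_le (hcond s hs)) (sq_nonneg s)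
    linarith
  have hanti := antitoneOn_mul_of_hasDerivAt (fun s hs => (hderiv s hs).add_const 1) hneg
  refine tendsto_zero_of_nonneg_of_mul_le (C := s₀ * (b s₀ + 1)) ?_ ?_
  all_goals filter_upwards [eventually_ge_atTop s₀] with s hs
  · linarith [hb s hs]
  · exact hanti self_mem_Ici hs hs

theorem stmt_2 (s₀ α : ℝ) (hs₀ : 0 < s₀) (hα : 0 < α)
    (b b' : ℝ → ℝ)
    (hderiv : ∀ s, s₀ ≤ s → HasDerivAt b (b' s) s)
    (hb'cont : ContinuousOn b' (Set.Ici s₀))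
    (hb : ∀ s, s₀ ≤ s → -1 ≤ b s)
    (hcond : ∀ s, s₀ ≤ s → (-(b' s) * s - (b s + 1)) * s ^ 2 ≥ α) :
    Tendsto (fun s => b s + 1) atTop (nhds 0) :=
  stmt_2_general s₀ α hα b b' hderiv hb hcond
end

section
/- Let b : [s₀,∞) → ℝ be a C¹ function with b ≥ −1 such that (−b′(s)·s − (b(s)+1))·s² ≥ α for all s ≥ s₀, with α > 0 and s₀ > 0. Then (1 + b(s))·s² ≥ α/2 for all s > s₀. -/
/-!
The hypothesis together with `b ≥ -1` gives `b' s ≤ -α / s³`, so `b s - α / (2 s²)` is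
nonincreasing. Comparing its value at `s` with its values at `σ → ∞`, where it is at least
`-1 - α / (2 σ²) → -1`, gives `b s ≥ -1 + α / (2 s²)`.
-/

open Set Filter Topology

theorem hasDerivAt_div_two_mul_sq (c : ℝ) {x : ℝ} (hx : x ≠ 0) :
    HasDerivAt (fun y => c / (2 * y ^ 2)) (-c / x ^ 3) x :=
  ((hasDerivAt_const x c).fun_div ((hasDerivAt_pow 2 x).const_mul 2) (by positivity)).congr_deriv
    (by field_simp; ring)

theorem antitoneOn_sub_div_two_mul_sq {f f' : ℝ → ℝ} {a c : ℝ} (ha : 0 < a)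
    (hf : ∀ x, a ≤ x → HasDerivAt f (f' x) x) (hf' : ∀ x, a < x → f' x ≤ -c / x ^ 3) :
    AntitoneOn (fun x => f x - c / (2 * x ^ 2)) (Ici a) := by
  have hderiv : ∀ x, a ≤ x → HasDerivAt (fun y => f y - c / (2 * y ^ 2)) (f' x + c / x ^ 3) x :=
    fun x hx =>
      ((hf x hx).sub (hasDerivAt_div_two_mul_sq c (ha.trans_le hx).ne')).congr_deriv (by ring)
  refine antitoneOn_of_deriv_nonpos (convex_Ici a)
    (fun x hx => (hderiv x hx).continuousAt.continuousWithinAt) ?_ ?_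
  · rw [interior_Ici]
    exact fun x hx => (hderiv x hx.le).differentiableAt.differentiableWithinAt
  · rw [interior_Ici]
    intro x hx
    rw [(hderiv x hx.le).deriv]
    linarith [hf' x hx, neg_div (x ^ 3) c]

theorem add_div_two_mul_sq_le_of_deriv_le {f f' : ℝ → ℝ} {a c m : ℝ} (ha : 0 < a)
    (hf : ∀ x, a ≤ x → HasDerivAt f (f' x) x) (hf' : ∀ x, a < x → f' x ≤ -c / x ^ 3)
    (hm : ∀ x, a ≤ x → m ≤ f x) {s : ℝ} (hs : a ≤ s) :
    m + c / (2 * s ^ 2) ≤ f s := by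
  have hanti := antitoneOn_sub_div_two_mul_sq ha hf hf'
  have hbound : ∀ σ, s ≤ σ → m - c / (2 * σ ^ 2) ≤ f s - c / (2 * s ^ 2) := fun σ hσ =>
    (sub_le_sub_right (hm σ (hs.trans hσ)) _).trans (hanti hs (hs.trans hσ) hσ)
  have hlim : Tendsto (fun σ : ℝ => m - c / (2 * σ ^ 2)) atTop (𝓝 m) := by
    have h : Tendsto (fun σ : ℝ => 2 * σ ^ 2) atTop atTop :=
      (tendsto_pow_atTop two_ne_zero).const_mul_atTop two_pos
    simpa using tendsto_const_nhds.sub (h.const_div_atTop c)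
  have := le_of_tendsto hlim (eventually_ge_atTop s |>.mono hbound)
  linarith

theorem stmt_3_general (s₀ α : ℝ) (hs₀ : 0 < s₀)
    (b b' : ℝ → ℝ)
    (hderiv : ∀ s, s₀ ≤ s → HasDerivAt b (b' s) s)
    (hb : ∀ s, s₀ ≤ s → -1 ≤ b s)
    (hcond : ∀ s, s₀ ≤ s → (-(b' s) * s - (b s + 1)) * s ^ 2 ≥ α) :
    ∀ s, s₀ < s → (1 + b s) * s ^ 2 ≥ α / 2 := by
  intro s hs
  have hb' : ∀ x, s₀ < x → b' x ≤ -α / x ^ 3 := by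
    intro x hx
    have hx3 : 0 < x ^ 3 := pow_pos (hs₀.trans hx) 3
    rw [le_div_iff₀ hx3]
    nlinarith [hcond x hx.le, hb x hx.le, sq_nonneg x]
  have hlower := add_div_two_mul_sq_le_of_deriv_le hs₀ hderiv hb' hb hs.le
  have hs0 : s ≠ 0 := (hs₀.trans hs).ne'
  have hhalf : α / (2 * s ^ 2) * s ^ 2 = α / 2 := by field_simp
  nlinarith [hhalf]

theorem stmt_3 (s₀ α : ℝ) (hs₀ : 0 < s₀) (hα : 0 < α)
    (b b' : ℝ → ℝ)
    (hderiv : ∀ s, s₀ ≤ s → HasDerivAt b (b' s) s)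
    (hb'cont : ContinuousOn b' (Set.Ici s₀))
    (hb : ∀ s, s₀ ≤ s → -1 ≤ b s)
    (hcond : ∀ s, s₀ ≤ s → (-(b' s) * s - (b s + 1)) * s ^ 2 ≥ α) :
    ∀ s, s₀ < s → (1 + b s) * s ^ 2 ≥ α / 2 :=
  stmt_3_general s₀ α hs₀ b b' hderiv hb hcond
end

section
/- Let b : [s₀,∞) → ℝ be C¹ with b(s)+1 > 0 and (−b′(s)·s − (1+ε)(b(s)+1))·s² ≥ α for all s ≥ s₀, with 0 < ε < 1 and α, s₀ > 0. Then there exists s₁ ≥ s₀ such that 2b(s) + 1 + ε < 0 for all s ≥ s₁. -/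
/-! The hypothesis says `b' s * s + (1 + ε) (b s + 1) < 0`, so `(b s + 1) * s` has derivative
`b' s * s + b s + 1 < -ε (b s + 1) < 0` and stays below its value `C` at `s₀`. Hence
`b s + 1 ≤ C / s → 0`, while `2 b + 1 + ε < 0` only asks for `2 (b + 1) < 1 - ε`. -/

open Set

theorem antitoneOn_mul_id_Ici {f f' : ℝ → ℝ} {a : ℝ}
    (hf : ∀ s, a ≤ s → HasDerivAt f (f' s) s)
    (hnonpos : ∀ s, a < s → f' s * s + f s ≤ 0) :
    AntitoneOn (fun s => f s * s) (Ici a) := by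
  have hderiv : ∀ s, a ≤ s → HasDerivAt (fun s => f s * s) (f' s * s + f s) s := fun s hs =>
    ((hf s hs).mul (hasDerivAt_id' s)).congr_deriv (by ring)
  apply antitoneOn_of_deriv_nonpos (convex_Ici a)
  · exact fun s hs => (hderiv s hs).continuousAt.continuousWithinAt
  · rw [interior_Ici]
    exact fun s hs => (hderiv s (le_of_lt hs)).differentiableAt.differentiableWithinAt
  · rw [interior_Ici]
    intro s hs
    rw [(hderiv s (le_of_lt hs)).deriv]
    exact hnonpos s hs

theorem exists_forall_lt_of_mul_id_le {u : ℝ → ℝ} {s₀ C δ : ℝ} (hs₀ : 0 < s₀) (hδ : 0 < δ)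
    (hu : ∀ s, s₀ ≤ s → u s * s ≤ C) :
    ∃ s₁, s₀ ≤ s₁ ∧ ∀ s, s₁ ≤ s → u s < δ := by
  refine ⟨max s₀ (C / δ + 1), le_max_left _ _, fun s hs => ?_⟩
  have hs₀s : s₀ ≤ s := le_of_max_le_left hs
  have hCs : C < δ * s := by
    have : C / δ < s := by linarith [le_of_max_le_right hs]
    rwa [div_lt_iff₀' hδ] at this
  exact lt_of_mul_lt_mul_right (a := s) (by linarith [hu s hs₀s]) (by linarith)

theorem stmt_5_general (s₀ ε α : ℝ) (hs₀ : 0 < s₀) (hε0 : 0 < ε) (hε1 : ε < 1) (hα : 0 < α)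
    (b b' : ℝ → ℝ)
    (hderiv : ∀ s, s₀ ≤ s → HasDerivAt b (b' s) s)
    (hb : ∀ s, s₀ ≤ s → 0 < b s + 1)
    (hcond : ∀ s, s₀ ≤ s → (-(b' s) * s - (1 + ε) * (b s + 1)) * s ^ 2 ≥ α) :
    ∃ s₁, s₀ ≤ s₁ ∧ ∀ s, s₁ ≤ s → 2 * b s + 1 + ε < 0 := by
  have hanti : AntitoneOn (fun s => (b s + 1) * s) (Ici s₀) := by
    refine antitoneOn_mul_id_Ici (fun s hs => (hderiv s hs).add_const 1) fun s hs => ?_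
    have hpos : 0 < -(b' s) * s - (1 + ε) * (b s + 1) :=
      pos_of_mul_pos_left (hα.trans_le (hcond s hs.le)) (sq_nonneg s)
    nlinarith [mul_pos hε0 (hb s hs.le)]
  obtain ⟨s₁, hs₁, hlt⟩ := exists_forall_lt_of_mul_id_le (u := fun s => 2 * (b s + 1))
    (C := 2 * ((b s₀ + 1) * s₀)) hs₀ (sub_pos.2 hε1) fun s hs => by
      have := hanti self_mem_Ici hs hs
      simp only at this ⊢
      linarith
  exact ⟨s₁, hs₁, fun s hs => by linarith [hlt s hs]⟩

theorem stmt_5 (s₀ ε α : ℝ) (hs₀ : 0 < s₀) (hε0 : 0 < ε) (hε1 : ε < 1) (hα : 0 < α)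
    (b b' : ℝ → ℝ)
    (hderiv : ∀ s, s₀ ≤ s → HasDerivAt b (b' s) s)
    (hb'cont : ContinuousOn b' (Set.Ici s₀))
    (hb : ∀ s, s₀ ≤ s → 0 < b s + 1)
    (hcond : ∀ s, s₀ ≤ s → (-(b' s) * s - (1 + ε) * (b s + 1)) * s ^ 2 ≥ α) :
    ∃ s₁, s₀ ≤ s₁ ∧ ∀ s, s₁ ≤ s → 2 * b s + 1 + ε < 0 :=
  stmt_5_general s₀ ε α hs₀ hε0 hε1 hα b b' hderiv hb hcond
end

section
/- Suppose there exist ε, α, s₀ > 0 such that (−s·b′(s) − (1+ε)(1+b(s)))·s² ≥ α for all s ≥ s₀. Then there exists κ₀ > 0 (depending on p, ε, α) such that for all κ ∈ (0,κ₀) and s ≥ s₀: (−s·b_κ′(s) − (1+ε)(1+b_κ(s)))·s² ≥ α/2, where b_κ(s) = b(s) − (p−2)κ/(κ+s²). -/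
/-!
Subtracting `c / (κ + t²)` from `b`, with `c = (p - 2) κ`, changes the quantity
`(-s b'(s) - (1 + ε)(1 + b(s))) s²` by exactly `c ((1 + ε) u - 2 u²)`, where `u = s² / (κ + s²)`
lies in `[0, 1]`. This correction is `O(κ)` uniformly in `s`, so for `κ` small it costs at most
half of the margin `α`.
-/

lemma deriv_sub_const_div_add_sq {b : ℝ → ℝ} {s : ℝ} (hb : DifferentiableAt ℝ b s)
    {κ : ℝ} (hκ : 0 < κ) (c : ℝ) :
    deriv (fun t => b t - c / (κ + t ^ 2)) s = deriv b s + 2 * c * s / (κ + s ^ 2) ^ 2 := by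
  have hD : κ + s ^ 2 ≠ 0 := by positivity
  have hden : HasDerivAt (fun t : ℝ => κ + t ^ 2) (2 * s) s := by
    simpa using (hasDerivAt_pow 2 s).const_add κ
  have hquot := (hasDerivAt_const s c).fun_div hden hD
  rw [(hb.hasDerivAt.fun_sub hquot).deriv]
  ring

lemma sub_const_div_add_sq_expr_eq {κ : ℝ} (hκ : 0 < κ) (c e s d B : ℝ) :
    (-(s * (d + 2 * c * s / (κ + s ^ 2) ^ 2)) - e * (1 + (B - c / (κ + s ^ 2)))) * s ^ 2 =
      (-(s * d) - e * (1 + B)) * s ^ 2 +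
        c * (e * (s ^ 2 / (κ + s ^ 2)) - 2 * (s ^ 2 / (κ + s ^ 2)) ^ 2) := by
  have hD : κ + s ^ 2 ≠ 0 := by positivity
  field_simp
  ring

lemma sq_div_add_sq_le_one {κ : ℝ} (hκ : 0 < κ) (s : ℝ) : s ^ 2 / (κ + s ^ 2) ≤ 1 :=
  (div_le_one (by positivity)).mpr (by linarith)

lemma abs_mul_sub_two_mul_sq_le {u : ℝ} (h0 : 0 ≤ u) (h1 : u ≤ 1) (a : ℝ) :
    |a * u - 2 * u ^ 2| ≤ |a| + 2 := by
  have hau : |a * u| ≤ |a| := by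
    rw [abs_mul, abs_of_nonneg h0]
    exact mul_le_of_le_one_right (abs_nonneg a) h1
  have hu2 : |2 * u ^ 2| ≤ 2 := by
    rw [abs_of_nonneg (by positivity)]
    nlinarith
  calc |a * u - 2 * u ^ 2| ≤ |a * u| + |2 * u ^ 2| := abs_sub _ _
    _ ≤ |a| + 2 := add_le_add hau hu2

theorem stmt_12_general (p ε α s₀ : ℝ)
    (hα : 0 < α)
    (b : ℝ → ℝ) (hb : Differentiable ℝ b)
    (hcond : ∀ s, s₀ ≤ s → (-(s * deriv b s) - (1 + ε) * (1 + b s)) * s ^ 2 ≥ α) :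
    ∃ κ₀ > (0 : ℝ), ∀ κ, 0 < κ → κ < κ₀ → ∀ s, s₀ ≤ s →
      (-(s * deriv (fun t => b t - (p - 2) * κ / (κ + t ^ 2)) s) -
          (1 + ε) * (1 + (b s - (p - 2) * κ / (κ + s ^ 2)))) * s ^ 2 ≥ α / 2 := by
  set M := (|p - 2| + 1) * (|1 + ε| + 2)
  refine ⟨α / (2 * M), by positivity, fun κ hκ hκ₀ s hs => ?_⟩
  rw [deriv_sub_const_div_add_sq (hb s) hκ, sub_const_div_add_sq_expr_eq hκ]
  set X := (1 + ε) * (s ^ 2 / (κ + s ^ 2)) - 2 * (s ^ 2 / (κ + s ^ 2)) ^ 2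
  have hX : |X| ≤ |1 + ε| + 2 :=
    abs_mul_sub_two_mul_sq_le (by positivity) (sq_div_add_sq_le_one hκ s) _
  have hcorr : |(p - 2) * κ * X| ≤ α / 2 :=
    calc |(p - 2) * κ * X| = |p - 2| * |X| * κ := by rw [abs_mul, abs_mul, abs_of_pos hκ]; ring
      _ ≤ M * κ := by
        gcongr
        exact mul_le_mul (by linarith) hX (abs_nonneg X) (by positivity)
      _ ≤ α / 2 := by
        rw [lt_div_iff₀ (by positivity)] at hκ₀
        linarith
  linarith [hcond s hs, neg_abs_le ((p - 2) * κ * X)]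

theorem stmt_12 (p ε α s₀ : ℝ) (hp : 1 < p) (hε0 : 0 < ε) (hε1 : ε ≤ 1)
    (hα : 0 < α) (hs₀ : 0 < s₀)
    (b : ℝ → ℝ) (hb : Differentiable ℝ b)
    (hcond : ∀ s, s₀ ≤ s → (-(s * deriv b s) - (1 + ε) * (1 + b s)) * s ^ 2 ≥ α) :
    ∃ κ₀ > (0 : ℝ), ∀ κ, 0 < κ → κ < κ₀ → ∀ s, s₀ ≤ s →
      (-(s * deriv (fun t => b t - (p - 2) * κ / (κ + t ^ 2)) s) -
          (1 + ε) * (1 + (b s - (p - 2) * κ / (κ + s ^ 2)))) * s ^ 2 ≥ α / 2 :=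
  stmt_12_general p ε α s₀ hα b hb hcond
end
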